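/- arXiv:1707.08598 — 3 statements merged into one kernel-verified Lean document; each statement's English description precedes it below -/
import Mathlib

section
/- Fix k ≥ 1, a profile V over C, let w = R_k(V), and let x ∈ C\{w}. If v'_i is a manipulative vote of voter i at V in favour of x, then exactly one of the following holds: (Type 1) x ∉ top_k(v_i), w ∉ top_k(v_i), x ≻_i w, x ∈ top_k(v'_i) and w ∉ top_k(v'_i); or (Type 2) x ∈ top_k(v_i), w ∈ top_k(v_i), x ≻_i w, x ∈ top_k(v'_i) and w ∉ top_k(v'_i). Moreover, Type 2 can occur only when k ≥ 2. -/
open scoped Classical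

namespace Paper

variable {C I : Type*}

/-- The set of the `k` highest-ranked candidates in the vote `v`. -/
noncomputable def topk [Fintype C] (k : ℕ) (v : LinearOrder C) : Finset C :=
  Finset.univ.filter fun c => (Finset.univ.filter fun d => v.lt c d).card < k

/-- The highest-ranked candidate of the vote `v`. -/
noncomputable def top [Fintype C] [Nonempty C] (v : LinearOrder C) : C :=
  @Finset.max' C v Finset.univ Finset.univ_nonempty

/-- The `k`-approval score of candidate `c` in the profile `V`. -/
noncomputable def sck [Fintype C] [Fintype I] (k : ℕ) (V : I → LinearOrder C) (c : C) : ℕ :=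
  (Finset.univ.filter fun i => c ∈ topk k (V i)).card

/-- The `k`-approval winner of the profile `V` with tie-breaking order `tb`:
the `tb`-greatest candidate among the candidates with maximal `k`-approval score;
equivalently, the unique candidate beating every other candidate. -/
noncomputable def winner [Fintype C] [Nonempty C] [Fintype I] (k : ℕ) (tb : LinearOrder C)
    (V : I → LinearOrder C) : C :=
  @Finset.max' C tb (Finset.univ.filter fun x => ∀ y, sck k V y ≤ sck k V x)
    (by
      obtain ⟨b, -, hb⟩ := Finset.exists_max_image Finset.univ (sck k V)
        ⟨Classical.arbitrary C, Finset.mem_univ _⟩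
      exact ⟨b, Finset.mem_filter.mpr ⟨Finset.mem_univ _, fun y => hb y (Finset.mem_univ y)⟩⟩)

/-- `v'` is a manipulative vote of voter `i` at the profile `V`. -/
def manip [Fintype C] [Nonempty C] [Fintype I] [DecidableEq I] (k : ℕ) (tb : LinearOrder C)
    (V : I → LinearOrder C) (i : I) (v' : LinearOrder C) : Prop :=
  (V i).lt (winner k tb V) (winner k tb (Function.update V i v'))

/-- `v'` is a level-1 strategy of voter `i` at the profile `V`: the outcome it produces is
strictly preferred (w.r.t. `i`'s sincere vote) to every other feasible outcome. -/
def level1 [Fintype C] [Nonempty C] [Fintype I] [DecidableEq I] (k : ℕ) (tb : LinearOrder C)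
    (V : I → LinearOrder C) (i : I) (v' : LinearOrder C) : Prop :=
  ∀ u : LinearOrder C,
    winner k tb (Function.update V i u) ≠ winner k tb (Function.update V i v') →
    (V i).lt (winner k tb (Function.update V i u)) (winner k tb (Function.update V i v'))

/-- `v` is a minimal manipulative vote of voter `i` at `V`. -/
def minimalManip [Fintype C] [Nonempty C] [Fintype I] [DecidableEq I] (k : ℕ)
    (tb : LinearOrder C) (V : I → LinearOrder C) (i : I) (v : LinearOrder C) : Prop :=
  manip k tb V i v ∧ ∀ v', manip k tb V i v' →
    ((topk k (V i)) \ (topk k v)).card ≤ ((topk k (V i)) \ (topk k v')).card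

section Approval

variable [Fintype C]

theorem mem_topk_iff {k : ℕ} {v : LinearOrder C} {c : C} :
    c ∈ topk k v ↔ (Finset.univ.filter fun d => v.lt c d).card < k := by
  simp [topk]

theorem mem_topk_of_lt {k : ℕ} {v : LinearOrder C} {c d : C} (h : v.lt c d)
    (hc : c ∈ topk k v) : d ∈ topk k v := by
  let _ := v
  rw [mem_topk_iff] at hc ⊢
  refine lt_of_le_of_lt (Finset.card_le_card fun e he => ?_) hc
  simp only [Finset.mem_filter, Finset.mem_univ, true_and] at he ⊢
  exact h.trans he

theorem card_topk_le (k : ℕ) (v : LinearOrder C) : (topk k v).card ≤ k := by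
  let _ := v
  let above : C → ℕ := fun c => (Finset.univ.filter fun d => c < d).card
  have above_strictAnti : StrictAnti above := fun c d hcd =>
    Finset.card_lt_card <| Finset.ssubset_iff_of_subset
      (fun e he => by simp only [Finset.mem_filter, Finset.mem_univ, true_and] at he ⊢
                      exact hcd.trans he)
      |>.mpr ⟨d, by simpa using hcd, by simp⟩
  simpa using Finset.card_le_card_of_injOn above
    (fun c hc => Finset.mem_range.mpr (mem_topk_iff.mp hc)) above_strictAnti.injective.injOn

theorem two_le_of_mem_topk {k : ℕ} {v : LinearOrder C} {c d : C} (hc : c ∈ topk k v)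
    (hd : d ∈ topk k v) (hcd : c ≠ d) : 2 ≤ k := by
  calc 2 = ({c, d} : Finset C).card := (Finset.card_pair hcd).symm
    _ ≤ (topk k v).card := Finset.card_le_card (Finset.insert_subset hc (by simpa using hd))
    _ ≤ k := card_topk_le k v

variable [Fintype I]

theorem sck_update [DecidableEq I] (k : ℕ) (V : I → LinearOrder C) (i : I) (v' : LinearOrder C)
    (c : C) :
    sck k (Function.update V i v') c + (if c ∈ topk k (V i) then 1 else 0)
      = sck k V c + (if c ∈ topk k v' then 1 else 0) := by
  unfold sck
  rw [Finset.card_filter, Finset.card_filter,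
    ← Finset.sum_erase_add _ _ (Finset.mem_univ i), ← Finset.sum_erase_add _ _ (Finset.mem_univ i),
    Function.update_self, add_right_comm]
  congr 2
  · refine Finset.sum_congr rfl fun j hj => ?_
    rw [Function.update_of_ne (Finset.mem_erase.mp hj).1]
  · split_ifs <;> rfl

variable [Nonempty C]

theorem sck_le_sck_winner (k : ℕ) (tb : LinearOrder C) (V : I → LinearOrder C) (c : C) :
    sck k V c ≤ sck k V (winner k tb V) := by
  have hmem := @Finset.max'_mem C tb (Finset.univ.filter fun x => ∀ y, sck k V y ≤ sck k V x)
  exact (Finset.mem_filter.mp (hmem _)).2 c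

theorem le_winner_of_forall_sck_le (k : ℕ) (tb : LinearOrder C) (V : I → LinearOrder C) {c : C}
    (hc : ∀ d, sck k V d ≤ sck k V c) : tb.le c (winner k tb V) :=
  @Finset.le_max' C tb _ c (Finset.mem_filter.mpr ⟨Finset.mem_univ c, hc⟩)

/-- The gap `sck x - sck w` is `≤ 0` before and `≥ 0` after; equality at both ends would make
the tie-break prefer each of `x`, `w` to the other. -/
theorem sck_gap_lt_of_winner_ne {k : ℕ} {tb : LinearOrder C} {V V' : I → LinearOrder C}
    (h : winner k tb V' ≠ winner k tb V) :
    sck k V' (winner k tb V) + sck k V (winner k tb V')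
      < sck k V' (winner k tb V') + sck k V (winner k tb V) := by
  have before := sck_le_sck_winner k tb V (winner k tb V')
  have after := sck_le_sck_winner k tb V' (winner k tb V)
  by_contra! hgap
  have tie_before : ∀ d, sck k V d ≤ sck k V (winner k tb V') := fun d =>
    (sck_le_sck_winner k tb V d).trans (by omega)
  have tie_after : ∀ d, sck k V' d ≤ sck k V' (winner k tb V) := fun d =>
    (sck_le_sck_winner k tb V' d).trans (by omega)
  exact h (tb.le_antisymm _ _ (le_winner_of_forall_sck_le k tb V tie_before)
    (le_winner_of_forall_sck_le k tb V' tie_after))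

variable [DecidableEq I]

/-- With `[c ∈ u]` the indicator of `c ∈ topk k u`, the gap `sck x - sck w` changes by
`[x ∈ v'] - [x ∈ vᵢ] - [w ∈ v'] + [w ∈ vᵢ]`, which must be positive, while
`[w ∈ vᵢ] ≤ [x ∈ vᵢ]` because the voter ranks `x` above `w`. -/
theorem manip.mem_topk {k : ℕ} {tb : LinearOrder C} {V : I → LinearOrder C} {i : I}
    {v' : LinearOrder C} (h : manip k tb V i v') :
    winner k tb (Function.update V i v') ∈ topk k v' ∧ winner k tb V ∉ topk k v' ∧
      (winner k tb (Function.update V i v') ∈ topk k (V i) ↔ winner k tb V ∈ topk k (V i)) := by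
  let _ := V i
  have gap := sck_gap_lt_of_winner_ne (ne_of_gt h)
  have upward := mem_topk_of_lt (k := k) h
  have hx := sck_update k V i v' (winner k tb (Function.update V i v'))
  have hw := sck_update k V i v' (winner k tb V)
  split_ifs at hx hw <;> grind

end Approval

theorem statement_1_general {C I : Type*} [Fintype C] [Nonempty C] [Fintype I] [DecidableEq I]
    (k : ℕ) (tb : LinearOrder C) (V : I → LinearOrder C)
    (i : I) (x : C) (v' : LinearOrder C)
    (hman : manip k tb V i v')
    (hfav : winner k tb (Function.update V i v') = x) :
    (Xor'
      (x ∉ topk k (V i) ∧ winner k tb V ∉ topk k (V i) ∧ (V i).lt (winner k tb V) x ∧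
        x ∈ topk k v' ∧ winner k tb V ∉ topk k v')
      (x ∈ topk k (V i) ∧ winner k tb V ∈ topk k (V i) ∧ (V i).lt (winner k tb V) x ∧
        x ∈ topk k v' ∧ winner k tb V ∉ topk k v')) ∧
    ((x ∈ topk k (V i) ∧ winner k tb V ∈ topk k (V i) ∧ (V i).lt (winner k tb V) x ∧
        x ∈ topk k v' ∧ winner k tb V ∉ topk k v') → 2 ≤ k) := by
  obtain ⟨hx', hw', hiff⟩ := hman.mem_topk
  have hpref : (V i).lt (winner k tb V) x := hfav ▸ hman
  rw [hfav] at hx' hiff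
  have hne : x ≠ winner k tb V := by
    let _ := V i
    exact ne_of_gt hpref
  refine ⟨?_, fun h => two_le_of_mem_topk h.1 h.2.1 hne⟩
  by_cases hxi : x ∈ topk k (V i)
  · exact Or.inr ⟨⟨hxi, hiff.mp hxi, hpref, hx', hw'⟩, fun h => h.1 hxi⟩
  · exact Or.inl ⟨⟨hxi, mt hiff.mpr hxi, hpref, hx', hw'⟩, fun h => hxi h.1⟩

/-- Lemma on the two types of manipulative votes under `k`-approval. -/
theorem statement_1 {C I : Type*} [Fintype C] [Nonempty C] [Fintype I] [DecidableEq I]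
    (k : ℕ) (hk : 1 ≤ k) (tb : LinearOrder C) (V : I → LinearOrder C)
    (i : I) (x : C) (v' : LinearOrder C)
    (hx : x ≠ winner k tb V)
    (hman : manip k tb V i v')
    (hfav : winner k tb (Function.update V i v') = x) :
    (Xor'
      (x ∉ topk k (V i) ∧ winner k tb V ∉ topk k (V i) ∧ (V i).lt (winner k tb V) x ∧
        x ∈ topk k v' ∧ winner k tb V ∉ topk k v')
      (x ∈ topk k (V i) ∧ winner k tb V ∈ topk k (V i) ∧ (V i).lt (winner k tb V) x ∧
        x ∈ topk k v' ∧ winner k tb V ∉ topk k v')) ∧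
    ((x ∈ topk k (V i) ∧ winner k tb V ∈ topk k (V i) ∧ (V i).lt (winner k tb V) x ∧
        x ∈ topk k v' ∧ winner k tb V ∉ topk k v') → 2 ≤ k) :=
  statement_1_general k tb V i x v' hman hfav

end Paper
end

section
/- Fix k ≥ 1 and a profile V over C, and let w = R_k(V). Let v*_i be a manipulative vote of voter i at V, let V' = (V_{-i}, v*_i), and let w' = R_k(V') with w' ≠ w. Then exactly one of the following holds: (a) w ∈ top_k(v_i)\top_k(v*_i) (the old winner is demoted), or (b) w' ∈ top_k(v*_i)\top_k(v_i) (the new winner is promoted). -/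
open scoped Classical

namespace Paper

variable {C I : Type*}

lemma topk_up [Fintype C] {k : ℕ} {v : LinearOrder C} {c d : C}
    (hc : c ∈ topk k v) (hlt : v.lt c d) : d ∈ topk k v := by
  simp only [topk, Finset.mem_filter, Finset.mem_univ, true_and] at hc ⊢
  refine lt_of_le_of_lt (Finset.card_le_card ?_) hc
  intro e he
  simp only [Finset.mem_filter, Finset.mem_univ, true_and] at he ⊢
  exact @lt_trans C v.toPartialOrder.toPreorder c d e hlt he

lemma winner_spec [Fintype C] [Nonempty C] [Fintype I] (k : ℕ) (tb : LinearOrder C)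
    (V : I → LinearOrder C) (y : C) : sck k V y ≤ sck k V (winner k tb V) := by
  have h : winner k tb V ∈ Finset.univ.filter fun x => ∀ y, sck k V y ≤ sck k V x := by
    unfold winner
    exact Finset.max'_mem _ _
  exact (Finset.mem_filter.mp h).2 y

lemma winner_tb_le [Fintype C] [Nonempty C] [Fintype I] (k : ℕ) (tb : LinearOrder C)
    (V : I → LinearOrder C) {x : C} (hx : ∀ y, sck k V y ≤ sck k V x) :
    tb.le x (winner k tb V) := by
  unfold winner
  exact Finset.le_max' _ _ (Finset.mem_filter.mpr ⟨Finset.mem_univ _, hx⟩)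

lemma sck_le_update [Fintype C] [Fintype I] [DecidableEq I] (k : ℕ) (V : I → LinearOrder C)
    (i : I) (v' : LinearOrder C) {c : C} (h : c ∈ topk k (V i) → c ∈ topk k v') :
    sck k V c ≤ sck k (Function.update V i v') c := by
  refine Finset.card_le_card ?_
  intro j hj
  simp only [Finset.mem_filter, Finset.mem_univ, true_and] at hj ⊢
  by_cases hji : j = i
  · subst hji; rw [Function.update_self]; exact h hj
  · rw [Function.update_of_ne hji]; exact hj

/-- either the old winner is demoted or the new winner is promoted,
but not both. -/
theorem statement_3 {C I : Type*} [Fintype C] [Nonempty C] [Fintype I] [DecidableEq I]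
    (k : ℕ) (hk : 1 ≤ k) (tb : LinearOrder C) (V : I → LinearOrder C)
    (i : I) (vstar : LinearOrder C)
    (hman : manip k tb V i vstar)
    (hne : winner k tb (Function.update V i vstar) ≠ winner k tb V) :
    Xor'
      (winner k tb V ∈ topk k (V i) ∧ winner k tb V ∉ topk k vstar)
      (winner k tb (Function.update V i vstar) ∈ topk k vstar ∧
        winner k tb (Function.update V i vstar) ∉ topk k (V i)) := by
  classical
  set w := winner k tb V with hw
  set w' := winner k tb (Function.update V i vstar) with hw'
  unfold manip at hman
  by_cases hA : w ∈ topk k (V i) ∧ w ∉ topk k vstar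
  · left
    refine ⟨hA, fun hB => hB.2 (topk_up hA.1 hman)⟩
  · right
    refine ⟨?_, hA⟩
    by_contra hB
    push_neg at hA hB
    -- score bookkeeping
    have h1 : sck k V w' ≤ sck k V w := winner_spec k tb V w'
    have h2 : sck k (Function.update V i vstar) w
        ≤ sck k (Function.update V i vstar) w' := winner_spec k tb _ w
    have tA : sck k V w ≤ sck k (Function.update V i vstar) w :=
      sck_le_update k V i vstar hA
    have tB : sck k (Function.update V i vstar) w' ≤ sck k V w' := by
      have h0 : Function.update (Function.update V i vstar) i (V i) = V := by
        rw [Function.update_idem, Function.update_eq_self]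
      have h3 := sck_le_update k (Function.update V i vstar) i (V i) (c := w')
        (by rw [Function.update_self]; exact hB)
      rwa [h0] at h3
    have e1 : sck k V w = sck k V w' := by omega
    have e2 : sck k (Function.update V i vstar) w
        = sck k (Function.update V i vstar) w' := by omega
    have hle1 : tb.le w' w :=
      winner_tb_le k tb V fun y => (winner_spec k tb V y).trans (le_of_eq e1)
    have hle2 : tb.le w w' :=
      winner_tb_le k tb (Function.update V i vstar)
        fun y => (winner_spec k tb _ y).trans (le_of_eq e2.symm)
    exact hne (@le_antisymm C tb.toPartialOrder w' w hle1 hle2)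

end Paper
end

section
/- Fix a profile V over C, let w = R_2(V) be the 2-approval winner at V, and let i be a voter with w ∉ top_2(v_i). For every manipulative vote u of voter i at V with respect to 2-approval there exists a manipulative vote v' of voter i with |top_2(v_i)\top_2(v')| = 1 and R_2(V_{-i}, v') = R_2(V_{-i}, u). Consequently, every minimal manipulative vote v of such a voter i satisfies |top_2(v_i)\top_2(v)| = 1. -/
/-! Only the top-two set of voter `i`'s ballot affects the scores, and hence the outcome. Let
`w` be the sincere winner and `w'` the winner after a manipulation `u`. If `w'` is already among
`i`'s sincere top two, approving `w'` together with a candidate of `top₂ u` outside the sincere top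
two still elects `w'`. Otherwise approve `w'` together with either sincere top candidate `a`: `w'`
beats `w` after the manipulation and `w ∉ top₂(vᵢ)` beats `a` sincerely, so `w'` beats `a` even
after `a` keeps `i`'s approval. Either new top two differs from the sincere one in one candidate;
and a manipulation that keeps the sincere top two elects `w`, so minimal ones swap exactly one. -/

open scoped Classical

namespace Paper

variable {C I : Type*}

open Finset Function

theorem _root_.Finset.card_sdiff_pair_of_mem_of_notMem {α : Type*} [DecidableEq α] {A : Finset α}
    {x y : α} (hx : x ∈ A) (hy : y ∉ A) : (A \ {x, y}).card = A.card - 1 := by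
  rw [← card_erase_of_mem hx]
  congr 1
  ext z
  by_cases hzy : z = y
  · subst hzy; simp [hy]
  · simp [hzy, and_comm]

section Topk

variable [Fintype C]

/-- Zero-based: the top candidate of `v` has rank `0`. -/
noncomputable def rank (v : LinearOrder C) (c : C) : ℕ :=
  (univ.filter fun d => v.lt c d).card

theorem mem_topk {k : ℕ} {v : LinearOrder C} {c : C} : c ∈ topk k v ↔ rank v c < k := by
  simp [topk, rank]

theorem rank_lt_rank {v : LinearOrder C} {a b : C} (h : v.lt a b) : rank v b < rank v a := by
  let _ := v
  refine card_lt_card ⟨fun d hd => ?_, fun hsub => ?_⟩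
  · simp only [mem_filter, mem_univ, true_and] at hd ⊢
    exact h.trans hd
  · simpa using hsub (show b ∈ univ.filter fun d => v.lt a d by simpa using h)

theorem rank_injective (v : LinearOrder C) : Injective (rank v) := by
  let _ := v
  intro a b hab
  by_contra hne
  rcases lt_or_gt_of_ne hne with h | h
  · exact (rank_lt_rank h).ne' hab
  · exact (rank_lt_rank h).ne hab

theorem rank_lt_card (v : LinearOrder C) (c : C) : rank v c < Fintype.card C :=
  card_lt_univ_of_notMem (x := c) (by simp)

theorem image_rank (v : LinearOrder C) : univ.image (rank v) = range (Fintype.card C) :=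
  eq_of_subset_of_card_le
    (fun _ h => by
      obtain ⟨c, -, rfl⟩ := mem_image.1 h
      exact mem_range.2 (rank_lt_card v c))
    (by rw [card_image_of_injective _ (rank_injective v), card_range, card_univ])

theorem card_topk (k : ℕ) (v : LinearOrder C) : (topk k v).card = min k (Fintype.card C) := by
  have htopk : topk k v = univ.filter fun c => rank v c < k := by ext; simp [mem_topk]
  calc (topk k v).card = ((topk k v).image (rank v)).card :=
        (card_image_of_injective _ (rank_injective v)).symm
    _ = ((range (Fintype.card C)).filter (· < k)).card := by
        rw [htopk, ← image_rank, filter_image]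
    _ = min k (Fintype.card C) := by
        rw [← card_range (min k _)]
        congr 1
        ext
        simp [and_comm]

theorem le_card_of_notMem_topk {k : ℕ} {v : LinearOrder C} {c : C} (hc : c ∉ topk k v) :
    k ≤ Fintype.card C := by
  by_contra! hlt
  refine hc (eq_univ_of_card (topk k v) ?_ ▸ mem_univ c)
  rw [card_topk]
  omega

theorem topk_eq_of_subset {k : ℕ} {v v' : LinearOrder C} (h : topk k v ⊆ topk k v') :
    topk k v = topk k v' :=
  eq_of_subset_of_card_le h (by rw [card_topk, card_topk])

theorem topk_card_eq {v : LinearOrder C} {A : Finset C} (h : ∀ a ∈ A, ∀ b ∉ A, v.lt b a) :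
    topk A.card v = A := by
  let _ := v
  ext c
  rw [mem_topk]
  by_cases hc : c ∈ A
  · refine iff_of_true ?_ hc
    calc rank v c ≤ (A.erase c).card := card_le_card fun d hd => by
            simp only [mem_filter, mem_univ, true_and] at hd
            refine mem_erase.2 ⟨hd.ne', ?_⟩
            by_contra hdA
            exact (h c hc d hdA).not_gt hd
      _ < A.card := card_erase_lt_of_mem hc
  · refine iff_of_false ?_ hc
    exact not_lt.2 (card_le_card fun a ha => by simpa using h a ha c hc)

theorem exists_topk_eq (A : Finset C) : ∃ v : LinearOrder C, topk A.card v = A := by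
  let e := Fintype.equivFin C
  refine ⟨LinearOrder.lift' (fun c => toLex (decide (c ∈ A), e c))
    fun a b h => e.injective (congrArg (fun p => (ofLex p).2) h), topk_card_eq fun a ha b hb => ?_⟩
  exact Prod.Lex.toLex_lt_toLex.2 (Or.inl (by simp [ha, hb]))

end Topk

def Beats (tb : LinearOrder C) (p q : ℕ) (x y : C) : Prop :=
  q < p ∨ q = p ∧ tb.lt y x

theorem Beats.mono {tb : LinearOrder C} {p q p' q' : ℕ} {x y : C} (h : Beats tb p q x y)
    (hp : p ≤ p') (hq : q' ≤ q) : Beats tb p' q' x y := by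
  rcases h with h | ⟨rfl, h⟩
  · exact Or.inl (by omega)
  · rcases hq.lt_or_eq with hq | rfl
    · exact Or.inl (by omega)
    · rcases hp.lt_or_eq with hp | rfl
      · exact Or.inl hp
      · exact Or.inr ⟨rfl, h⟩

theorem Beats.trans {tb : LinearOrder C} {p q r : ℕ} {x y z : C} (hxy : Beats tb p q x y)
    (hyz : Beats tb q r y z) : Beats tb p r x z := by
  let _ := tb
  rcases hxy with hxy | ⟨rfl, hxy⟩ <;> rcases hyz with hyz | ⟨rfl, hyz⟩
  · exact Or.inl (hyz.trans hxy)
  · exact Or.inl hxy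
  · exact Or.inl hyz
  · exact Or.inr ⟨rfl, hyz.trans hxy⟩

theorem winner_eq_iff [Fintype C] [Nonempty C] [Fintype I] {k : ℕ} {tb : LinearOrder C}
    {P : I → LinearOrder C} {x : C} :
    winner k tb P = x ↔ ∀ y ≠ x, Beats tb (sck k P x) (sck k P y) x y := by
  let _ := tb
  simp only [winner, max'_eq_iff, mem_filter, mem_univ, true_and]
  constructor
  · rintro ⟨hmax, hle⟩ y hy
    rcases (hmax y).lt_or_eq with h | h
    · exact Or.inl h
    · exact Or.inr ⟨h, (hle y fun z => h ▸ hmax z).lt_of_ne hy⟩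
  · intro h
    have hmax : ∀ y, sck k P y ≤ sck k P x := fun y => by
      by_cases hy : y = x
      · exact hy ▸ le_rfl
      · rcases h y hy with h | ⟨h, -⟩
        exacts [h.le, h.le]
    refine ⟨hmax, fun y hy => not_lt.1 fun hxy => ?_⟩
    rcases h y hxy.ne' with h | ⟨-, h⟩
    · exact (hy x).not_gt h
    · exact h.not_gt hxy

section Update

variable [Fintype C] [Fintype I] [DecidableEq I]

noncomputable def restScore (k : ℕ) (V : I → LinearOrder C) (i : I) (c : C) : ℕ :=
  ((univ.erase i).filter fun j => c ∈ topk k (V j)).card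

variable {k : ℕ} {V : I → LinearOrder C} {i : I} {u : LinearOrder C} {c : C}

theorem sck_update_of_mem (h : c ∈ topk k u) :
    sck k (update V i u) c = restScore k V i c + 1 := by
  rw [sck, restScore, card_filter, card_filter, ← sum_erase_add univ _ (mem_univ i), update_self,
    if_pos h]
  congr 1
  exact sum_congr rfl fun j hj => by rw [update_of_ne (ne_of_mem_erase hj)]

theorem sck_update_of_notMem (h : c ∉ topk k u) :
    sck k (update V i u) c = restScore k V i c := by
  rw [sck, restScore, card_filter, card_filter, ← sum_erase_add univ _ (mem_univ i), update_self,
    if_neg h, add_zero]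
  exact sum_congr rfl fun j hj => by rw [update_of_ne (ne_of_mem_erase hj)]

theorem restScore_le_sck_update : restScore k V i c ≤ sck k (update V i u) c := by
  by_cases h : c ∈ topk k u
  · rw [sck_update_of_mem h]; exact Nat.le_succ _
  · rw [sck_update_of_notMem h]

theorem sck_update_le : sck k (update V i u) c ≤ restScore k V i c + 1 := by
  by_cases h : c ∈ topk k u
  · rw [sck_update_of_mem h]
  · rw [sck_update_of_notMem h]; exact Nat.le_succ _

theorem sck_of_mem_topk (h : c ∈ topk k (V i)) : sck k V c = restScore k V i c + 1 := by
  rw [← sck_update_of_mem h, update_eq_self]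

theorem sck_of_notMem_topk (h : c ∉ topk k (V i)) : sck k V c = restScore k V i c := by
  rw [← sck_update_of_notMem h, update_eq_self]

variable [Nonempty C] {tb : LinearOrder C}

theorem winner_update_congr {u' : LinearOrder C} (h : topk k u = topk k u') :
    winner k tb (update V i u) = winner k tb (update V i u') := by
  have hsc : sck k (update V i u) = sck k (update V i u') := funext fun c => by
    by_cases hc : c ∈ topk k u
    · rw [sck_update_of_mem hc, sck_update_of_mem (h ▸ hc)]
    · rw [sck_update_of_notMem hc, sck_update_of_notMem (h ▸ hc)]
  simp only [winner, hsc]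

theorem topk_ne_of_winner_update_ne
    (h : winner k tb (update V i u) ≠ winner k tb V) : topk k u ≠ topk k (V i) :=
  fun htop => h (by rw [winner_update_congr htop, update_eq_self])

theorem winner_update_eq_of_beats {v : LinearOrder C} {x : C}
    (hx : winner k tb (update V i u) = x) (hxv : x ∈ topk k v)
    (h : ∀ y ∈ topk k v, y ∉ topk k u → y ≠ x →
      Beats tb (restScore k V i x + 1) (restScore k V i y + 1) x y) :
    winner k tb (update V i v) = x := by
  rw [winner_eq_iff] at hx ⊢
  intro y hy
  have hxu := (hx y hy).mono sck_update_le le_rfl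
  rw [sck_update_of_mem hxv]
  by_cases hyv : y ∈ topk k v
  · rw [sck_update_of_mem hyv]
    by_cases hyu : y ∈ topk k u
    · rwa [sck_update_of_mem hyu] at hxu
    · exact h y hyv hyu hy
  · rw [sck_update_of_notMem hyv]
    exact hxu.mono le_rfl restScore_le_sck_update

end Update

section TwoApproval

variable [Fintype C] [Nonempty C] [DecidableEq C] [Fintype I] [DecidableEq I]
  {tb : LinearOrder C} {V : I → LinearOrder C} {i : I}

theorem exists_swap_winner_update (hw : winner 2 tb V ∉ topk 2 (V i)) {u : LinearOrder C}
    (hu : winner 2 tb (update V i u) ≠ winner 2 tb V) :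
    ∃ v : LinearOrder C, (topk 2 (V i) \ topk 2 v).card = 1 ∧
      winner 2 tb (update V i v) = winner 2 tb (update V i u) := by
  set w := winner 2 tb V
  set w' := winner 2 tb (update V i u) with hw'
  set A := topk 2 (V i) with hA
  have hA2 : A.card = 2 := by
    have := le_card_of_notMem_topk hw
    rw [hA, card_topk]
    omega
  obtain ⟨x, hxA, y, hyA, hw'xy, hbeats⟩ : ∃ x ∈ A, ∃ y ∉ A, w' ∈ ({x, y} : Finset C) ∧
      ∀ z ∈ ({x, y} : Finset C), z ∉ topk 2 u → z ≠ w' →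
        Beats tb (restScore 2 V i w' + 1) (restScore 2 V i z + 1) w' z := by
    by_cases hw'A : w' ∈ A
    · obtain ⟨c, hcu, hcA⟩ := not_subset.1 fun hsub =>
        topk_ne_of_winner_update_ne hu (topk_eq_of_subset hsub)
      refine ⟨w', hw'A, c, hcA, mem_insert_self _ _, fun z hz hzu hzw' => ?_⟩
      obtain rfl : z = c := by simpa [hzw'] using hz
      exact absurd hcu hzu
    · obtain ⟨a, ha⟩ : A.Nonempty := card_pos.1 (by omega)
      refine ⟨a, ha, w', hw'A, mem_insert_of_mem (mem_singleton_self _), fun z hz _ hzw' => ?_⟩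
      obtain rfl : z = a := by simpa [hzw'] using hz
      have hw'w : Beats tb (restScore 2 V i w' + 1) (restScore 2 V i w) w' w :=
        (winner_eq_iff.1 hw'.symm w hu.symm).mono sck_update_le restScore_le_sck_update
      have hwz : Beats tb (restScore 2 V i w) (restScore 2 V i z + 1) w z := by
        have h := winner_eq_iff.1 rfl z (ne_of_mem_of_not_mem ha hw)
        rwa [sck_of_notMem_topk hw, sck_of_mem_topk ha] at h
      exact hw'w.trans hwz
  obtain ⟨v, hv⟩ := exists_topk_eq ({x, y} : Finset C)
  rw [card_pair (ne_of_mem_of_not_mem hxA hyA)] at hv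
  refine ⟨v, ?_, winner_update_eq_of_beats hw'.symm (hv ▸ hw'xy) fun z hz => hbeats z (hv ▸ hz)⟩
  rw [hv, card_sdiff_pair_of_mem_of_notMem hxA hyA, hA2]

end TwoApproval

/-- under 2-approval, a promoter can always achieve any manipulable outcome
by swapping a single candidate into his top two positions; hence his minimal manipulative
votes perform exactly one swap. -/
theorem statement_8 {C I : Type*} [Fintype C] [Nonempty C] [DecidableEq C]
    [Fintype I] [DecidableEq I]
    (tb : LinearOrder C) (V : I → LinearOrder C) (i : I)
    (hw : winner 2 tb V ∉ topk 2 (V i)) :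
    (∀ u : LinearOrder C, manip 2 tb V i u →
      ∃ v' : LinearOrder C, manip 2 tb V i v' ∧
        ((topk 2 (V i)) \ (topk 2 v')).card = 1 ∧
        winner 2 tb (Function.update V i v') = winner 2 tb (Function.update V i u)) ∧
    (∀ v : LinearOrder C, minimalManip 2 tb V i v →
      ((topk 2 (V i)) \ (topk 2 v)).card = 1) := by
  have hne : ∀ u, manip 2 tb V i u → winner 2 tb (update V i u) ≠ winner 2 tb V := by
    intro u hu
    let _ := V i
    exact hu.ne'
  refine ⟨fun u hu => ?_, fun v hv => ?_⟩
  · obtain ⟨v', hcard, hwin⟩ := exists_swap_winner_update hw (hne u hu)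
    exact ⟨v', by rwa [manip, hwin], hcard, hwin⟩
  · obtain ⟨v', hcard, hwin⟩ := exists_swap_winner_update hw (hne v hv.1)
    have hle : (topk 2 (V i) \ topk 2 v).card ≤ 1 := by
      rw [← hcard]
      -- `minimalManip` takes `\` with the classical `DecidableEq C`; `convert` identifies them.
      convert hv.2 v' (by rw [manip, hwin]; exact hv.1)
    have hpos : 0 < (topk 2 (V i) \ topk 2 v).card := card_pos.2 <| sdiff_nonempty.2 fun hsub =>
      topk_ne_of_winner_update_ne (hne v hv.1) (topk_eq_of_subset hsub).symm
    omega

end Paper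
end
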